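/- For 0 < γ < 1 and H = ⌊1/(1-γ)⌋ + 1, one has (γ² - γ^{2H+4})/(1-γ²) ≥ 2γ²/(5(1-γ)). -/

import Mathlib

/-! Since `x ≤ exp (x - 1)`, one has `γ ^ n ≤ exp (-n (1 - γ))`; the choice of `H` makes
`(2H + 2)(1 - γ) ≥ 2`, so `γ ^ (2H + 2) ≤ e⁻² < 1/5`. After factoring out `γ² / (1 - γ)` the claim
reads `2 (1 + γ) ≤ 5 (1 - γ ^ (2H + 2))`, and `1 + γ ≤ 2` finishes it. -/

open Real

theorem pow_le_exp_neg_mul_one_sub {x : ℝ} (hx : 0 ≤ x) (n : ℕ) :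
    x ^ n ≤ exp (-(n * (1 - x))) := by
  calc x ^ n ≤ exp (x - 1) ^ n := by
        gcongr
        linarith [add_one_le_exp (x - 1)]
    _ = exp (-(n * (1 - x))) := by rw [← exp_nat_mul]; ring_nf

theorem exp_neg_two_lt_one_fifth : exp (-2) < 1 / 5 := by
  rw [exp_neg, one_div, inv_lt_inv₀ (exp_pos 2) (by norm_num), show (2 : ℝ) = 1 + 1 by norm_num,
    exp_add]
  nlinarith [exp_one_gt_d9]

theorem two_div_five_le_sub_pow_div {γ : ℝ} (h0 : 0 ≤ γ) (h1 : γ < 1) {n : ℕ}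
    (hn : γ ^ n ≤ 1 / 5) :
    2 * γ ^ 2 / (5 * (1 - γ)) ≤ (γ ^ 2 - γ ^ (n + 2)) / (1 - γ ^ 2) := by
  have hsq : γ ^ 2 < 1 := pow_lt_one₀ h0 h1 two_ne_zero
  rw [div_le_div_iff₀ (by linarith) (by linarith), pow_add]
  have key : 2 * (1 + γ) ≤ 5 * (1 - γ ^ n) := by linarith
  have hpos : 0 ≤ γ ^ 2 * (1 - γ) := by positivity
  nlinarith [mul_le_mul_of_nonneg_left key hpos]

theorem stmt_5 (γ : ℝ) (h0 : 0 < γ) (h1 : γ < 1) (H : ℕ)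
    (hH : H = ⌊1 / (1 - γ)⌋₊ + 1) :
    2 * γ ^ 2 / (5 * (1 - γ)) ≤ (γ ^ 2 - γ ^ (2 * H + 4)) / (1 - γ ^ 2) := by
  have hH_gt : 1 / (1 - γ) < H := by
    rw [hH, Nat.cast_add_one]
    exact Nat.lt_floor_add_one _
  have hexp : 2 ≤ ((2 * H + 2 : ℕ) : ℝ) * (1 - γ) := by
    rw [div_lt_iff₀ (by linarith)] at hH_gt
    push_cast
    nlinarith
  have hpow : γ ^ (2 * H + 2) ≤ 1 / 5 :=
    calc γ ^ (2 * H + 2) ≤ exp (-((2 * H + 2 : ℕ) * (1 - γ))) := pow_le_exp_neg_mul_one_sub h0.le _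
      _ ≤ exp (-2) := exp_le_exp.2 (by linarith)
      _ ≤ 1 / 5 := exp_neg_two_lt_one_fifth.le
  exact two_div_five_le_sub_pow_div h0.le h1 hpow
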